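/- Let a ∈ Aut(T), let O be an orbit of the action of a on the first level X with |O| = m, and suppose (a^m)|_x = a for some x ∈ O. If m > 1, then a has infinite order. -/

import Mathlib

open List

/-- Vertices of the rooted `d`-ary tree `T`: finite words over the alphabet
`X = Fin d`. -/
abbrev Vertex (d : ℕ) := List (Fin d)

/-- `g` is an automorphism of the rooted `d`-ary tree: a bijection of the
vertex set `X*` preserving word length and the prefix relation. -/
def IsTreeAut {d : ℕ} (g : Equiv.Perm (Vertex d)) : Prop :=
  (∀ v : Vertex d, (g v).length = v.length) ∧
    ∀ v w : Vertex d, g v <+: g (v ++ w)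

theorem IsTreeAut.prefix_mono {d : ℕ} {g : Equiv.Perm (Vertex d)} (hg : IsTreeAut g)
    {u u' : Vertex d} (h : u <+: u') : g u <+: g u' := by
  obtain ⟨t, rfl⟩ := h
  exact hg.2 u t

/-- The automorphism group `Aut(T)` of the rooted `d`-ary tree, as a subgroup
of the group of permutations of the vertex set. -/
def treeAut (d : ℕ) : Subgroup (Equiv.Perm (Vertex d)) where
  carrier := {g | IsTreeAut g}
  one_mem' := ⟨fun _ => rfl, fun v w => ⟨w, rfl⟩⟩
  mul_mem' := by
    intro g h hg hh
    obtain ⟨hg1, hg2⟩ := hg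
    obtain ⟨hh1, hh2⟩ := hh
    refine ⟨fun v => ?_, fun v w => ?_⟩
    · simp [Equiv.Perm.mul_apply, hg1, hh1]
    · obtain ⟨t, ht⟩ := hh2 v w
      simp only [Equiv.Perm.mul_apply]
      rw [← ht]
      exact hg2 (h v) t
  inv_mem' := by
    intro g hgmem
    obtain ⟨hg1, hg2⟩ := hgmem
    have hg : IsTreeAut g := ⟨hg1, hg2⟩
    have hlen' : ∀ v : Vertex d, (g⁻¹ v).length = v.length := by
      intro v
      conv_rhs => rw [← (show g (g⁻¹ v) = v from g.apply_symm_apply v)]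
      rw [hg1]
    refine ⟨hlen', fun v w => ?_⟩
    have hle : (g⁻¹ v).length ≤ (g⁻¹ (v ++ w)).length := by
      have h1 := hlen' v
      have h2 := hlen' (v ++ w)
      rw [List.length_append] at h2
      omega
    have htp : (g⁻¹ (v ++ w)).take (g⁻¹ v).length <+: g⁻¹ (v ++ w) :=
      List.take_prefix _ _
    have hgtp : g ((g⁻¹ (v ++ w)).take (g⁻¹ v).length) <+: v ++ w := by
      have := hg.prefix_mono htp
      rwa [show ∀ y, g (g⁻¹ y) = y from g.apply_symm_apply] at this
    have hlen_tp : (g ((g⁻¹ (v ++ w)).take (g⁻¹ v).length)).length = v.length := by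
      rw [hg1, List.length_take, min_eq_left hle, hlen' v]
    have hveq : g ((g⁻¹ (v ++ w)).take (g⁻¹ v).length) = v := by
      have h1 := List.prefix_iff_eq_take.mp hgtp
      have h2 := List.prefix_iff_eq_take.mp (List.prefix_append v w)
      rw [h1, hlen_tp]
      exact h2.symm
    have hkey : (g⁻¹ (v ++ w)).take (g⁻¹ v).length = g⁻¹ v := by
      apply g.injective
      rw [hveq, show ∀ y, g (g⁻¹ y) = y from g.apply_symm_apply]
    rw [← hkey]
    exact htp

open scoped Classical in
/-- The state (section) `g|_v` of `g` at the vertex `v` : the unique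
automorphism satisfying `g (v ++ w) = g v ++ (g|_v) w` for all `w`. -/
noncomputable def state {d : ℕ} (g : Equiv.Perm (Vertex d)) (v : Vertex d) :
    Equiv.Perm (Vertex d) :=
  if h : Function.Bijective (fun w : Vertex d => (g (v ++ w)).drop v.length) then
    Equiv.ofBijective _ h
  else 1

/-- A finite-state automorphism: one having finitely many states.  The
finite-state automorphisms form the group `F(X)`. -/
def FiniteState {d : ℕ} (g : Equiv.Perm (Vertex d)) : Prop :=
  (Set.range fun v : Vertex d => state g v).Finite

/-- The cardinality of the orbit `Orb_a(v)` of the vertex `v` under the cyclic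
group generated by `a`. -/
noncomputable def orbitCard {d : ℕ} (a : Equiv.Perm (Vertex d)) (v : Vertex d) : ℕ :=
  Nat.card (Set.range fun n : ℤ => (a ^ n) v)

/-- The orbit-signalizer `OS(a) = { a^m|_v : v ∈ X^*, m = |Orb_a(v)| }`. -/
noncomputable def OS {d : ℕ} (a : Equiv.Perm (Vertex d)) : Set (Equiv.Perm (Vertex d)) :=
  {s | ∃ v : Vertex d, s = state (a ^ orbitCard a v) v}

/-- `a` has finite orbit-signalizer. -/
def FiniteOS {d : ℕ} (a : Equiv.Perm (Vertex d)) : Prop := (OS a).Finite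

/-- A self-similar (state-closed) subgroup. -/
def SelfSimilar {d : ℕ} (G : Subgroup (Equiv.Perm (Vertex d))) : Prop :=
  ∀ g ∈ G, ∀ v : Vertex d, state g v ∈ G

/-- A contracting group: there is a finite set `N ⊆ G` such that every
`g ∈ G` has all its states in `N` from some level on. -/
def ContractingGroup {d : ℕ} (G : Subgroup (Equiv.Perm (Vertex d))) : Prop :=
  ∃ N : Set (Equiv.Perm (Vertex d)), N.Finite ∧ N ⊆ (G : Set (Equiv.Perm (Vertex d))) ∧
    ∀ g ∈ G, ∃ n : ℕ, ∀ v : Vertex d, n ≤ v.length → state g v ∈ N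

/-- A contracting automorphism: the self-similar group generated by all of its
states is contracting. -/
def ContractingAut {d : ℕ} (f : Equiv.Perm (Vertex d)) : Prop :=
  ContractingGroup (Subgroup.closure (Set.range fun v : Vertex d => state f v))

/-- The activity sequence `θ_k(g)`: the number of vertices `v` of level `k`
whose state `g|_v` acts nontrivially on the first level `X`. -/
noncomputable def theta {d : ℕ} (g : Equiv.Perm (Vertex d)) (k : ℕ) : ℕ :=
  Nat.card {v : Vertex d // v.length = k ∧ ∃ x : Fin d, state g v [x] ≠ [x]}

/-- A bounded automorphism: a finite-state automorphism with bounded activity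
sequence.  The bounded automorphisms form the group `Pol(0)`. -/
def BoundedAut {d : ℕ} (g : Equiv.Perm (Vertex d)) : Prop :=
  FiniteState g ∧ ∃ C : ℕ, ∀ k : ℕ, theta g k ≤ C

/-- A polynomial automorphism (an element of `Pol(∞)`): a finite-state
automorphism whose activity sequence is polynomially bounded. -/
def PolyAut {d : ℕ} (g : Equiv.Perm (Vertex d)) : Prop :=
  FiniteState g ∧ ∃ p : Polynomial ℕ, ∀ k : ℕ, theta g k ≤ p.eval k

/-- A finitary automorphism (an element of `Pol(-1)`): all states at some
level are trivial. -/
def Finitary {d : ℕ} (g : Equiv.Perm (Vertex d)) : Prop :=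
  ∃ k : ℕ, ∀ v : Vertex d, v.length = k → state g v = 1

/-- A functionally recursive automorphism: a member of some finitely generated
self-similar subgroup of `Aut(T)`.  These form the group `FR(X)`. -/
def FunctionallyRecursive {d : ℕ} (g : Equiv.Perm (Vertex d)) : Prop :=
  ∃ G : Subgroup (Equiv.Perm (Vertex d)), G ≤ treeAut d ∧ SelfSimilar G ∧
    (∃ S : Set (Equiv.Perm (Vertex d)), S.Finite ∧ G = Subgroup.closure S) ∧ g ∈ G

/-! If `a` had finite order `n`, then `m ∣ n` and `a^m` fixes `x`, so the state of `(a^m)^(n/m) = 1`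
at `x` is `((a^m)|_x)^(n/m) = a^(n/m)`. Hence `a^(n/m) = 1` with `0 < n/m < n`, which is absurd. -/

namespace IsTreeAut

variable {d : ℕ} {g h : Equiv.Perm (Vertex d)}

lemma apply_append_eq_append_drop (hg : IsTreeAut g) (v w : Vertex d) :
    g (v ++ w) = g v ++ (g (v ++ w)).drop v.length := by
  obtain ⟨t, ht⟩ := hg.2 v w
  rw [← ht, List.drop_left' (hg.1 v)]

lemma bijective_drop_apply_append (hg : IsTreeAut g) (v : Vertex d) :
    Function.Bijective fun w : Vertex d => (g (v ++ w)).drop v.length := by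
  refine ⟨fun w₁ w₂ hw => ?_, fun u => ?_⟩
  · have h₁₂ : g (v ++ w₁) = g (v ++ w₂) := by
      rw [hg.apply_append_eq_append_drop v w₁, hg.apply_append_eq_append_drop v w₂]
      exact congrArg (g v ++ ·) hw
    exact List.append_cancel_left (g.injective h₁₂)
  · obtain ⟨w, hw⟩ : v <+: g⁻¹ (g v ++ u) := by
      simpa using ((treeAut d).inv_mem hg).2 (g v) u
    refine ⟨w, ?_⟩
    simp [hw, List.drop_left' (hg.1 v)]

lemma state_apply (hg : IsTreeAut g) (v w : Vertex d) :
    state g v w = (g (v ++ w)).drop v.length := by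
  rw [state, dif_pos (hg.bijective_drop_apply_append v)]
  rfl

lemma _root_.state_one (v : Vertex d) : state (1 : Equiv.Perm (Vertex d)) v = 1 := by
  ext w
  rw [((treeAut d).one_mem : IsTreeAut 1).state_apply]
  simp

lemma apply_append (hg : IsTreeAut g) (v w : Vertex d) :
    g (v ++ w) = g v ++ state g v w := by
  rw [hg.state_apply]
  exact hg.apply_append_eq_append_drop v w

lemma state_mul (hg : IsTreeAut g) (hh : IsTreeAut h) (v : Vertex d) :
    state (g * h) v = state g (h v) * state h v := by
  ext w
  have hlen : (g (h v)).length = v.length := by rw [hg.1, hh.1]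
  rw [((treeAut d).mul_mem hg hh).state_apply, Equiv.Perm.mul_apply, Equiv.Perm.mul_apply,
    hh.apply_append, hg.apply_append, List.drop_left' hlen]

lemma state_pow_of_apply_eq (hg : IsTreeAut g) {v : Vertex d} (hv : g v = v) (k : ℕ) :
    state (g ^ k) v = state g v ^ k := by
  induction k with
  | zero => rw [pow_zero, pow_zero, state_one]
  | succ k ih =>
    rw [pow_succ, pow_succ, ((treeAut d).pow_mem hg k).state_mul hg, hv, ih]

end IsTreeAut

section orbitCard

variable {d : ℕ} (a : Equiv.Perm (Vertex d)) (v : Vertex d)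

lemma orbitCard_eq_period : orbitCard a v = MulAction.period a v := by
  have hrange : (Set.range fun n : ℤ => (a ^ n) v) = MulAction.orbit (Subgroup.zpowers a) v := by
    ext u
    constructor
    · rintro ⟨n, rfl⟩
      exact ⟨⟨a ^ n, Subgroup.zpow_mem_zpowers a n⟩, rfl⟩
    · rintro ⟨⟨g, hg⟩, rfl⟩
      obtain ⟨n, rfl⟩ := Subgroup.mem_zpowers_iff.mp hg
      exact ⟨n, rfl⟩
  rw [orbitCard, hrange, Nat.card_congr (MulAction.orbitZPowersEquiv a v), Nat.card_zmod,
    MulAction.period_eq_minimalPeriod]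

lemma pow_orbitCard_apply : (a ^ orbitCard a v) v = v := by
  rw [orbitCard_eq_period]
  exact MulAction.pow_period_smul a v

lemma orbitCard_dvd_orderOf : orbitCard a v ∣ orderOf a := by
  rw [orbitCard_eq_period]
  exact MulAction.period_dvd_orderOf a v

end orbitCard

theorem infinite_order_of_circuit_state_general
    (d : ℕ) (a : Equiv.Perm (Vertex d)) (ha : IsTreeAut a)
    (x : Fin d)
    (hx : state (a ^ orbitCard a ([x] : Vertex d)) ([x] : Vertex d) = a)
    (hm : 1 < orbitCard a ([x] : Vertex d)) :
    ¬ IsOfFinOrder a := by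
  intro hfin
  set m := orbitCard a ([x] : Vertex d)
  obtain ⟨k, hk⟩ := orbitCard_dvd_orderOf a [x]
  have hk_pos : 0 < k := Nat.pos_of_mul_pos_left (hk ▸ hfin.orderOf_pos)
  have hak : a ^ k = 1 :=
    calc a ^ k = state (a ^ m) [x] ^ k := by rw [hx]
      _ = state ((a ^ m) ^ k) [x] :=
        (((treeAut d).pow_mem ha m).state_pow_of_apply_eq (pow_orbitCard_apply a [x]) k).symm
      _ = 1 := by rw [← pow_mul, ← hk, pow_orderOf_eq_one, state_one]
  have hle : m * k ≤ k := hk ▸ orderOf_le_of_pow_eq_one hk_pos hak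
  nlinarith

/-- Let `a ∈ Aut(T)` and let `x` be a first-level letter whose
orbit under `a` has size `m`.  If `(a^m)|_x = a` and `m > 1`, then `a` has
infinite order. -/
theorem infinite_order_of_circuit_state
    (d : ℕ) (hd : 2 ≤ d) (a : Equiv.Perm (Vertex d)) (ha : IsTreeAut a)
    (x : Fin d)
    (hx : state (a ^ orbitCard a ([x] : Vertex d)) ([x] : Vertex d) = a)
    (hm : 1 < orbitCard a ([x] : Vertex d)) :
    ¬ IsOfFinOrder a :=
  infinite_order_of_circuit_state_general d a ha x hx hm
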